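/- arXiv:2102.12968 — 2 statements merged into one kernel-verified Lean document; each statement's English description precedes it below -/
import Mathlib

section
/- For positive integers n ≥ 2k and 0 ≤ a ≤ n/2 - k, one has (n/2 - a)^{\underline{k}} / n^{\underline{k}} ≤ ((n/2)^{\underline{k}} / n^{\underline{k}}) · ((n/2 - a)/(n/2))^k. -/
/-!
With `m = n/2` and `b = m - a`, the factor `m^{\underline{k}} / n^{\underline{k}}` splits off the
left-hand side, leaving `b^{\underline{k}} / m^{\underline{k}} ≤ (b/m)^k`. This holds factor by
factor: `(b - i)/(m - i) ≤ b/m` for `b ≤ m`.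
-/

theorem Nat.sub_mul_le_mul_sub_of_le {b m : ℕ} (h : b ≤ m) (i : ℕ) :
    (b - i) * m ≤ b * (m - i) := by
  rw [Nat.sub_mul, Nat.mul_sub, Nat.mul_comm b i]
  exact Nat.sub_le_sub_left (Nat.mul_le_mul_left i h) _

-- For `i ≥ m` the quotient is `x / 0 = 0`.
theorem Nat.cast_sub_div_cast_sub_le_div {b m : ℕ} (h : b ≤ m) (i : ℕ) :
    ((b - i : ℕ) : ℝ) / ((m - i : ℕ) : ℝ) ≤ (b : ℝ) / m := by
  rcases lt_or_ge i m with him | hmi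
  · have hmi : (0 : ℝ) < (m - i : ℕ) := by exact_mod_cast Nat.sub_pos_of_lt him
    have hm : (0 : ℝ) < m := by exact_mod_cast i.zero_le.trans_lt him
    rw [div_le_div_iff₀ hmi hm]
    exact_mod_cast Nat.sub_mul_le_mul_sub_of_le h i
  · rw [Nat.sub_eq_zero_of_le hmi, Nat.cast_zero, div_zero]
    positivity

theorem Nat.cast_descFactorial_div_le_div_pow {b m : ℕ} (h : b ≤ m) (k : ℕ) :
    (b.descFactorial k : ℝ) / m.descFactorial k ≤ ((b : ℝ) / m) ^ k := by
  simp only [Nat.descFactorial_eq_prod_range, Nat.cast_prod, ← Finset.prod_div_distrib]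
  calc ∏ i ∈ Finset.range k, ((b - i : ℕ) : ℝ) / ((m - i : ℕ) : ℝ)
      ≤ ∏ _i ∈ Finset.range k, (b : ℝ) / m :=
        Finset.prod_le_prod (fun _ _ => by positivity)
          (fun i _ => Nat.cast_sub_div_cast_sub_le_div h i)
    _ = ((b : ℝ) / m) ^ k := by rw [Finset.prod_const, Finset.card_range]

theorem stmt_4_general (n k a : ℕ) (hev : Even n) (hnk : 2 * k ≤ n)
    (ha : a ≤ n / 2 - k) :
    ((n / 2 - a).descFactorial k : ℝ) / (n.descFactorial k : ℝ) ≤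
      (((n / 2).descFactorial k : ℝ) / (n.descFactorial k : ℝ)) *
        (((n : ℝ) / 2 - (a : ℝ)) / ((n : ℝ) / 2)) ^ k := by
  have hhalf : (n : ℝ) / 2 = (n / 2 : ℕ) := by
    rw [Nat.cast_div_charZero (even_iff_two_dvd.mp hev), Nat.cast_ofNat]
  have hsub : (n : ℝ) / 2 - a = (n / 2 - a : ℕ) := by
    rw [hhalf, Nat.cast_sub (by omega)]
  have hdesc : ((n / 2).descFactorial k : ℝ) ≠ 0 := by
    exact_mod_cast (Nat.descFactorial_pos.mpr (by omega)).ne'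
  rw [hsub, hhalf]
  calc ((n / 2 - a).descFactorial k : ℝ) / n.descFactorial k
      = ((n / 2).descFactorial k / n.descFactorial k) *
          ((n / 2 - a).descFactorial k / (n / 2).descFactorial k) := by
        rw [mul_comm, div_mul_div_cancel₀ hdesc]
    _ ≤ ((n / 2).descFactorial k / n.descFactorial k) *
          (((n / 2 - a : ℕ) : ℝ) / (n / 2 : ℕ)) ^ k := by
        gcongr
        exact Nat.cast_descFactorial_div_le_div_pow (Nat.sub_le _ _) k

/-- For positive integers `n ≥ 2k` (`n` even) and `0 ≤ a ≤ n/2 - k`: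
`(n/2 - a)^{\underline{k}} / n^{\underline{k}} ≤ ((n/2)^{\underline{k}} / n^{\underline{k}}) · ((n/2 - a)/(n/2))^k`. -/
theorem stmt_4 (n k a : ℕ) (hk : 1 ≤ k) (hev : Even n) (hnk : 2 * k ≤ n)
    (ha : a ≤ n / 2 - k) :
    ((n / 2 - a).descFactorial k : ℝ) / (n.descFactorial k : ℝ) ≤
      (((n / 2).descFactorial k : ℝ) / (n.descFactorial k : ℝ)) *
        (((n : ℝ) / 2 - (a : ℝ)) / ((n : ℝ) / 2)) ^ k :=
  stmt_4_general n k a hev hnk ha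
end

section
/- (First moment upper bound for 2-colorability.) Let k → ∞, n = n(k) even with 2k ≤ n, and suppose c = c(n,k) > (1+ε)·ln(2)/φ(n,k) for some fixed ε > 0, with m = c·n·2^{k-1} = o(C(n,k)^{1/2}). Then the probability that the random hypergraph H_k(n, m) admits any proper 2-coloring tends to 0 as k → ∞. -/
open Filter Finset

/-- `φ(n,k) = 2^k · (n/2)^{\underline{k}} / n^{\underline{k}}`. -/
noncomputable def phi (n k : ℕ) : ℝ :=
  2 ^ k * ((n / 2).descFactorial k : ℝ) / (n.descFactorial k : ℝ)

/-- A set of `k`-edges on `Fin n` is properly 2-colorable if some set `R` of vertices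
(the red class) meets and avoids no edge entirely, i.e. no edge is monochromatic. -/
def TwoColorable {N : ℕ} (S : Finset (Finset (Fin N))) : Prop :=
  ∃ R : Finset (Fin N), ∀ e ∈ S, ¬ e ⊆ R ∧ ¬ e ⊆ Rᶜ

/-!
A hypergraph is properly 2-colourable iff, for some red class `R`, all its edges lie among the
`k`-sets that are bichromatic for `R`. By convexity of `r ↦ C(r, k)`, at least `2 C(n/2, k)` of
the `C(n, k)` possible edges are monochromatic for any `R`, so the proportion of `m`-edge
hypergraphs whose edges are all bichromatic for `R` is at most
`(1 - 2 C(n/2, k) / C(n, k))^m = (1 - 2^{1-k} φ)^m ≤ exp (-c n φ)`.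
A union bound over the `2^n` choices of `R` bounds the probability by
`exp (n ln 2 - c n φ) < exp (-ε n ln 2) ≤ 4^{-ε k}`.
-/

namespace Nat

theorem two_mul_choose_le_choose_add_choose_sub (h k d : ℕ) :
    2 * h.choose k ≤ (h + d).choose k + (h - d).choose k := by
  induction d with
  | zero => simp only [add_zero, tsub_zero]; omega
  | succ d ih =>
    have hmono : (h + d).choose k ≤ (h + (d + 1)).choose k := choose_le_choose _ (by omega)
    rcases le_or_gt h d with hhd | hdh
    · rw [show h - (d + 1) = h - d by omega]
      omega
    rcases k with _ | k
    · simp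
    · have hup : (h + (d + 1)).choose (k + 1) = (h + d).choose k + (h + d).choose (k + 1) := by
        rw [← add_assoc, choose_succ_succ]
      have hdown : (h - d).choose (k + 1) = (h - (d + 1)).choose k + (h - (d + 1)).choose (k + 1) := by
        rw [show h - d = h - (d + 1) + 1 by omega, choose_succ_succ]
      have hk : (h - (d + 1)).choose k ≤ (h + d).choose k := choose_le_choose _ (by omega)
      omega

theorem two_mul_choose_half_le_choose_add_choose_sub {n r : ℕ} (hr : r ≤ n) (k : ℕ) :
    2 * (n / 2).choose k ≤ r.choose k + (n - r).choose k := by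
  rcases le_total (n / 2) r with hle | hle
  · have h := two_mul_choose_le_choose_add_choose_sub (n / 2) k (r - n / 2)
    rw [show n / 2 + (r - n / 2) = r by omega] at h
    have := choose_le_choose k (show n / 2 - (r - n / 2) ≤ n - r by omega)
    omega
  · have h := two_mul_choose_le_choose_add_choose_sub (n / 2) k (n / 2 - r)
    rw [show n / 2 - (n / 2 - r) = r by omega] at h
    have := choose_le_choose k (show n / 2 + (n / 2 - r) ≤ n - r by omega)
    omega

theorem descFactorial_mul_pow_le {a b : ℕ} (hab : a ≤ b) (m : ℕ) :
    a.descFactorial m * b ^ m ≤ b.descFactorial m * a ^ m := by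
  induction m with
  | zero => simp
  | succ m ih =>
    have hstep : (a - m) * b ≤ (b - m) * a := by
      rw [Nat.sub_mul, Nat.sub_mul, Nat.mul_comm b a]
      exact Nat.sub_le_sub_left (Nat.mul_le_mul_left m hab) _
    calc a.descFactorial (m + 1) * b ^ (m + 1)
        = ((a - m) * b) * (a.descFactorial m * b ^ m) := by rw [descFactorial_succ]; ring
      _ ≤ ((b - m) * a) * (b.descFactorial m * a ^ m) := Nat.mul_le_mul hstep ih
      _ = b.descFactorial (m + 1) * a ^ (m + 1) := by rw [descFactorial_succ]; ring

theorem choose_mul_pow_le {a b : ℕ} (hab : a ≤ b) (m : ℕ) :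
    a.choose m * b ^ m ≤ b.choose m * a ^ m := by
  have h := descFactorial_mul_pow_le hab m
  rw [descFactorial_eq_factorial_mul_choose, descFactorial_eq_factorial_mul_choose,
    Nat.mul_assoc, Nat.mul_assoc] at h
  exact Nat.le_of_mul_le_mul_left h m.factorial_pos

theorem cast_choose_div_cast_choose_le_pow {a b : ℕ} (hab : a ≤ b) (m : ℕ) :
    (a.choose m : ℝ) / b.choose m ≤ ((a : ℝ) / b) ^ m := by
  rcases lt_or_ge b m with hbm | hmb
  · rw [choose_eq_zero_of_lt (hab.trans_lt hbm), cast_zero, zero_div]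
    positivity
  · have hb : (0 : ℝ) < b.choose m := mod_cast choose_pos hmb
    rcases Nat.eq_zero_or_pos b with rfl | _
    · simp_all
    rw [div_pow, div_le_div_iff₀ hb (by positivity), mul_comm _ (b.choose m : ℝ)]
    exact_mod_cast choose_mul_pow_le hab m

end Nat

section Coloring

variable {α : Type*} [Fintype α] [DecidableEq α]

def bichromaticSets (R : Finset α) (k : ℕ) : Finset (Finset α) :=
  (univ.powersetCard k).filter fun e => ¬ e ⊆ R ∧ ¬ e ⊆ Rᶜ

theorem bichromaticSets_eq_sdiff (R : Finset α) (k : ℕ) :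
    bichromaticSets R k = univ.powersetCard k \ (R.powersetCard k ∪ Rᶜ.powersetCard k) := by
  ext e
  simp only [bichromaticSets, mem_filter, Finset.mem_sdiff, mem_union, mem_powersetCard]
  tauto

theorem card_powersetCard_union_compl (R : Finset α) {k : ℕ} (hk : k ≠ 0) :
    #(R.powersetCard k ∪ Rᶜ.powersetCard k) = (#R).choose k + (Fintype.card α - #R).choose k := by
  have hdisj : Disjoint (R.powersetCard k) (Rᶜ.powersetCard k) := by
    refine disjoint_left.2 fun e he he' => ?_
    rw [mem_powersetCard] at he he'
    have : e = ∅ := subset_empty.1 (inter_compl R ▸ subset_inter he.1 he'.1)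
    exact hk (he.2 ▸ this ▸ card_empty)
  rw [card_union_of_disjoint hdisj, card_powersetCard, card_powersetCard, card_compl]

theorem card_bichromaticSets_le (R : Finset α) {k : ℕ} (hk : k ≠ 0) :
    #(bichromaticSets R k) ≤ (Fintype.card α).choose k - 2 * (Fintype.card α / 2).choose k := by
  have hsub : R.powersetCard k ∪ Rᶜ.powersetCard k ⊆ univ.powersetCard k :=
    union_subset (powersetCard_mono (subset_univ R)) (powersetCard_mono (subset_univ Rᶜ))
  rw [bichromaticSets_eq_sdiff, card_sdiff_of_subset hsub, card_powersetCard_union_compl R hk,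
    card_powersetCard, card_univ]
  exact Nat.sub_le_sub_left
    (Nat.two_mul_choose_half_le_choose_add_choose_sub (card_le_univ R) k) _

end Coloring

theorem twoColorable_iff_subset_bichromaticSets {ν : ℕ} (S : Finset (Finset (Fin ν))) (k : ℕ)
    (hS : S ⊆ univ.powersetCard k) :
    TwoColorable S ↔ ∃ R, S ⊆ bichromaticSets R k := by
  refine exists_congr fun R => ⟨fun h e he => mem_filter.2 ⟨hS he, h e he⟩, fun h e he => ?_⟩
  exact (mem_filter.1 (h he)).2

theorem card_twoColorable_le (ν k M : ℕ) (hk : k ≠ 0) :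
    Nat.card {S : Finset (Finset (Fin ν)) //
        S ∈ (univ.powersetCard k).powersetCard M ∧ TwoColorable S}
      ≤ 2 ^ ν * (ν.choose k - 2 * (ν / 2).choose k).choose M := by
  classical
  rw [Nat.card_eq_fintype_card, Fintype.card_subtype]
  have hsub : univ.filter (fun S => S ∈ (univ.powersetCard k).powersetCard M ∧ TwoColorable S)
      ⊆ univ.biUnion fun R : Finset (Fin ν) => (bichromaticSets R k).powersetCard M := by
    intro S hS
    obtain ⟨hSk, hScol⟩ := (mem_filter.1 hS).2
    rw [mem_powersetCard] at hSk
    obtain ⟨R, hR⟩ := (twoColorable_iff_subset_bichromaticSets S k hSk.1).1 hScol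
    exact mem_biUnion.2 ⟨R, mem_univ R, mem_powersetCard.2 ⟨hR, hSk.2⟩⟩
  calc _ ≤ _ := card_le_card hsub
    _ ≤ ∑ R : Finset (Fin ν), #((bichromaticSets R k).powersetCard M) := card_biUnion_le
    _ ≤ ∑ _R : Finset (Fin ν), (ν.choose k - 2 * (ν / 2).choose k).choose M := by
        refine sum_le_sum fun R _ => ?_
        rw [card_powersetCard]
        simpa using Nat.choose_le_choose M (card_bichromaticSets_le R hk)
    _ = _ := by simp [Fintype.card_finset]

theorem card_hypergraphs (ν k M : ℕ) :
    Nat.card {S : Finset (Finset (Fin ν)) // S ∈ (univ.powersetCard k).powersetCard M}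
      = (ν.choose k).choose M := by
  rw [Nat.card_eq_finsetCard, card_powersetCard, card_powersetCard, card_univ, Fintype.card_fin]

theorem phi_eq (n k : ℕ) : phi n k = 2 ^ k * (n / 2).choose k / n.choose k := by
  have hfac : (k.factorial : ℝ) ≠ 0 := mod_cast k.factorial_ne_zero
  rw [phi, Nat.descFactorial_eq_factorial_mul_choose, Nat.descFactorial_eq_factorial_mul_choose]
  push_cast
  rw [mul_left_comm, mul_div_mul_left _ _ hfac]

theorem phi_pos {n k : ℕ} (h : 2 * k ≤ n) : 0 < phi n k := by
  rw [phi_eq]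
  have : 0 < (n / 2).choose k := Nat.choose_pos (by omega)
  have : 0 < n.choose k := Nat.choose_pos (by omega)
  positivity

theorem card_twoColorable_div_card_le_exp (ν k M : ℕ) (hk : k ≠ 0) :
    (Nat.card {S : Finset (Finset (Fin ν)) //
        S ∈ (univ.powersetCard k).powersetCard M ∧ TwoColorable S} : ℝ) /
      Nat.card {S : Finset (Finset (Fin ν)) // S ∈ (univ.powersetCard k).powersetCard M}
      ≤ Real.exp (ν * Real.log 2 - M * phi ν k / 2 ^ (k - 1)) := by
  have hphi : phi ν k / 2 ^ (k - 1) = 2 * (ν / 2).choose k / ν.choose k := by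
    rw [phi_eq, show (2 : ℝ) ^ k = 2 * 2 ^ (k - 1) by rw [← pow_succ']; congr 1; omega]
    field_simp
  set N := ν.choose k
  set B := (ν / 2).choose k
  have h2B : 2 * B ≤ N := by
    simpa [Nat.choose_eq_zero_of_lt (Nat.pos_of_ne_zero hk)] using
      Nat.two_mul_choose_half_le_choose_add_choose_sub (Nat.zero_le ν) k
  have hbase : ((N - 2 * B : ℕ) : ℝ) / N ≤ Real.exp (-(phi ν k / 2 ^ (k - 1))) := by
    refine le_trans ?_ (Real.one_sub_le_exp_neg _)
    rw [hphi]
    rcases eq_or_ne (N : ℝ) 0 with hN | hN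
    · simp [hN]
    · rw [Nat.cast_sub h2B, sub_div, div_self hN]
      push_cast
      rfl
  calc _ ≤ ((2 ^ ν * (N - 2 * B).choose M : ℕ) : ℝ) / (N.choose M : ℝ) := by
        rw [card_hypergraphs]
        gcongr
        exact card_twoColorable_le ν k M hk
    _ = 2 ^ ν * (((N - 2 * B).choose M : ℝ) / N.choose M) := by push_cast; ring
    _ ≤ 2 ^ ν * (((N - 2 * B : ℕ) : ℝ) / N) ^ M := by
        gcongr
        exact Nat.cast_choose_div_cast_choose_le_pow (Nat.sub_le _ _) M
    _ ≤ 2 ^ ν * Real.exp (-(phi ν k / 2 ^ (k - 1))) ^ M := by gcongr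
    _ = _ := by
        have h2 : (2 : ℝ) ^ ν = Real.exp (ν * Real.log 2) := by
          rw [Real.exp_nat_mul, Real.exp_log two_pos]
        rw [h2, ← Real.exp_nat_mul, ← Real.exp_add]
        ring_nf

theorem stmt_12_general (n m : ℕ → ℕ) (c : ℕ → ℝ) (ε : ℝ) (hε : 0 < ε)
    (hge : ∀ k, 2 * k ≤ n k)
    (hc : ∀ k, c k > (1 + ε) * Real.log 2 / phi (n k) k)
    (hm : ∀ k, (m k : ℝ) = c k * (n k : ℝ) * 2 ^ (k - 1)) :
    Tendsto (fun k =>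
        (Nat.card {S : Finset (Finset (Fin (n k))) //
            S ∈ ((Finset.univ : Finset (Fin (n k))).powersetCard k).powersetCard (m k) ∧
            TwoColorable S} : ℝ) /
        (Nat.card {S : Finset (Finset (Fin (n k))) //
            S ∈ ((Finset.univ : Finset (Fin (n k))).powersetCard k).powersetCard (m k)} : ℝ))
      atTop (nhds 0) := by
  have hlim : Tendsto (fun k : ℕ => Real.exp (-(2 * ε * Real.log 2 * k))) atTop (nhds 0) :=
    Real.tendsto_exp_neg_atTop_nhds_zero.comp
      (tendsto_natCast_atTop_atTop.const_mul_atTop (by positivity))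
  refine squeeze_zero' (Eventually.of_forall fun k => by positivity) ?_ hlim
  filter_upwards [eventually_ne_atTop 0] with k hk
  refine (card_twoColorable_div_card_le_exp (n k) k (m k) hk).trans (Real.exp_le_exp.2 ?_)
  have hcφ : (1 + ε) * Real.log 2 < c k * phi (n k) k := (div_lt_iff₀ (phi_pos (hge k))).1 (hc k)
  have hnk : (2 * k : ℝ) ≤ n k := mod_cast hge k
  have hM : (m k : ℝ) * phi (n k) k / 2 ^ (k - 1) = c k * phi (n k) k * n k := by
    rw [hm k]
    field_simp
  rw [hM]
  nlinarith [mul_le_mul_of_nonneg_right hcφ.le (Nat.cast_nonneg (n k)),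
    mul_le_mul_of_nonneg_left hnk (by positivity : 0 ≤ ε * Real.log 2)]

/-- First moment upper bound: if `c > (1+ε)·ln 2/φ(n,k)` and `m = c·n·2^{k-1}` with
`m = o(C(n,k)^{1/2})`, then the probability that the uniform random `k`-graph with `m`
distinct edges on `n` vertices is 2-colorable tends to `0` as `k → ∞`. -/
theorem stmt_12 (n m : ℕ → ℕ) (c : ℕ → ℝ) (ε : ℝ) (hε : 0 < ε)
    (hev : ∀ k, Even (n k)) (hge : ∀ k, 2 * k ≤ n k)
    (hc : ∀ k, c k > (1 + ε) * Real.log 2 / phi (n k) k)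
    (hm : ∀ k, (m k : ℝ) = c k * (n k : ℝ) * 2 ^ (k - 1))
    (hmo : Tendsto (fun k => (m k : ℝ) / ((n k).choose k : ℝ) ^ ((1 : ℝ) / 2))
      atTop (nhds 0)) :
    Tendsto (fun k =>
        (Nat.card {S : Finset (Finset (Fin (n k))) //
            S ∈ ((Finset.univ : Finset (Fin (n k))).powersetCard k).powersetCard (m k) ∧
            TwoColorable S} : ℝ) /
        (Nat.card {S : Finset (Finset (Fin (n k))) //
            S ∈ ((Finset.univ : Finset (Fin (n k))).powersetCard k).powersetCard (m k)} : ℝ))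
      atTop (nhds 0) :=
  stmt_12_general n m c ε hε hge hc hm
end
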